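/- arXiv:2003.12295 — 4 statements merged into one kernel-verified Lean document; each statement's English description precedes it below -/
import Mathlib

section
/- Let V be a finite-dimensional real vector space with a nondegenerate symmetric bilinear form f, and let L be an f-self-adjoint endomorphism of V. If L is diagonalizable, then V admits an orthonormal basis (with respect to f, i.e. |f(v_j,v_h)| = δ_{jh}) consisting of eigenvectors of L. -/
/-- A diagonalizable self-adjoint endomorphism of a finite-dimensional real
vector space with a nondegenerate symmetric bilinear form admits an orthonormal basis of
eigenvectors. -/
theorem stmt0 (V : Type*) [AddCommGroup V] [Module ℝ V] [FiniteDimensional ℝ V]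
    (B : LinearMap.BilinForm ℝ V) (hBnd : B.Nondegenerate)
    (hBsymm : ∀ x y : V, B x y = B y x)
    (L : Module.End ℝ V) (hLsa : ∀ x y : V, B (L x) y = B x (L y))
    (hLdiag : (⨆ μ : ℝ, Module.End.eigenspace L μ) = ⊤) :
    ∃ b : Module.Basis (Fin (Module.finrank ℝ V)) ℝ V,
      (∀ i j, |B (b i) (b j)| = if i = j then 1 else 0) ∧
      (∀ i, ∃ μ : ℝ, L (b i) = μ • b i) := by
  classical
  set W : ℝ → Submodule ℝ V := Module.End.eigenspace L
  have hInternal : DirectSum.IsInternal W :=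
    DirectSum.isInternal_submodule_of_iSupIndep_of_iSup_eq_top
      (Module.End.eigenspaces_iSupIndep L) hLdiag
  -- orthogonal basis v μ of each eigenspace
  have hsymm : ∀ μ : ℝ, (B.restrict (W μ)).IsSymm := by
    intro μ
    rw [LinearMap.BilinForm.isSymm_def]
    intro x y
    simpa using hBsymm (x : V) (y : V)
  choose v hv using fun μ : ℝ => LinearMap.BilinForm.exists_orthogonal_basis (LinearMap.BilinForm.isSymm_iff.mp (hsymm μ))
  let b0 : Module.Basis (Σ μ : ℝ, Fin (Module.finrank ℝ (W μ))) ℝ V :=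
    hInternal.collectedBasis v
  have hb0 : ∀ a : Σ μ : ℝ, Fin (Module.finrank ℝ (W μ)), b0 a = (v a.1 a.2 : V) := by
    intro a; rw [hInternal.collectedBasis_coe]
  have hmem : ∀ a : Σ μ : ℝ, Fin (Module.finrank ℝ (W μ)), b0 a ∈ W a.1 := by
    intro a; rw [hb0]; exact (v a.1 a.2).2
  have heig : ∀ a : Σ μ : ℝ, Fin (Module.finrank ℝ (W μ)), L (b0 a) = a.1 • b0 a := by
    intro a; exact (Module.End.mem_eigenspace_iff).mp (hmem a)
  -- orthogonality of b0
  have horth : ∀ a b : Σ μ : ℝ, Fin (Module.finrank ℝ (W μ)), a ≠ b → B (b0 a) (b0 b) = 0 := by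
    intro a b hab
    rcases eq_or_ne a.1 b.1 with h1 | h1
    · -- same eigenvalue: same component
      obtain ⟨μ, i⟩ := a
      obtain ⟨ν, j⟩ := b
      dsimp at h1
      subst h1
      have hij : i ≠ j := by
        intro h; exact hab (by simp [h])
      have := hv μ hij
      simpa [hb0, LinearMap.BilinForm.restrict_apply] using this
    · -- different eigenvalues
      have h1' : a.1 - b.1 ≠ 0 := sub_ne_zero.mpr h1
      have key : a.1 * B (b0 a) (b0 b) = b.1 * B (b0 a) (b0 b) := by
        have := hLsa (b0 a) (b0 b)
        rw [heig a, heig b] at this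
        simpa [smul_eq_mul, hBsymm] using this
      have : (a.1 - b.1) * B (b0 a) (b0 b) = 0 := by ring_nf; linarith [key]
      exact (mul_eq_zero.mp this).resolve_left h1'
  -- diagonal entries nonzero
  have hdiag : ∀ a, B (b0 a) (b0 a) ≠ 0 := by
    intro a h
    have hzero : ∀ y, B (b0 a) y = 0 := by
      intro y
      have : (B (b0 a) : V →ₗ[ℝ] ℝ) = 0 := by
        apply b0.ext
        intro j
        rcases eq_or_ne a j with rfl | hne
        · simpa using h
        · simpa using horth a j hne
      simpa using congrFun (congrArg (fun f : V →ₗ[ℝ] ℝ => (f : V → ℝ)) this) y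
    exact b0.ne_zero a (hBnd.1 (b0 a) hzero)
  -- rescale
  let u : (Σ μ : ℝ, Fin (Module.finrank ℝ (W μ))) → ℝˣ := fun a =>
    Units.mk0 ((Real.sqrt |B (b0 a) (b0 a)|)⁻¹)
      (by
        have : (0:ℝ) < |B (b0 a) (b0 a)| := abs_pos.mpr (hdiag a)
        positivity)
  let b1 := b0.unitsSMul u
  have hb1 : ∀ a, b1 a = (Real.sqrt |B (b0 a) (b0 a)|)⁻¹ • b0 a := fun a => by
    rw [show b1 a = u a • b0 a from Module.Basis.unitsSMul_apply a]; rfl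
  have hb1orth : ∀ a b, a ≠ b → B (b1 a) (b1 b) = 0 := by
    intro a b hab
    simp [hb1, horth a b hab]
  have hb1diag : ∀ a, |B (b1 a) (b1 a)| = 1 := by
    intro a
    have hpos : (0:ℝ) < |B (b0 a) (b0 a)| := abs_pos.mpr (hdiag a)
    have hs : Real.sqrt |B (b0 a) (b0 a)| * Real.sqrt |B (b0 a) (b0 a)| = |B (b0 a) (b0 a)| :=
      Real.mul_self_sqrt (le_of_lt hpos)
    have hsne : Real.sqrt |B (b0 a) (b0 a)| ≠ 0 := by positivity
    rw [hb1]
    simp only [map_smul, LinearMap.smul_apply, smul_eq_mul]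
    rw [abs_mul, abs_mul, abs_inv, abs_of_nonneg (Real.sqrt_nonneg _),
      ← mul_assoc, ← mul_inv, hs, inv_mul_cancel₀ (ne_of_gt hpos)]
  have hb1eig : ∀ a, L (b1 a) = a.1 • b1 a := by
    intro a
    rw [hb1, map_smul, heig a, smul_comm]
  -- reindex
  have : Fintype (Σ μ : ℝ, Fin (Module.finrank ℝ (W μ))) :=
    FiniteDimensional.fintypeBasisIndex b0
  let e := b1.indexEquiv (Module.finBasis ℝ V)
  refine ⟨b1.reindex e, ?_, ?_⟩
  · intro i j
    rw [Module.Basis.reindex_apply, Module.Basis.reindex_apply]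
    rcases eq_or_ne i j with rfl | hij
    · simpa using hb1diag (e.symm i)
    · have : e.symm i ≠ e.symm j := fun h => hij (by simpa using congrArg e h)
      simp [hij, hb1orth _ _ this]
  · intro i
    rw [Module.Basis.reindex_apply]
    exact ⟨(e.symm i).1, hb1eig (e.symm i)⟩
end

section
/- Let g be a Lie algebra with an ad-invariant nondegenerate symmetric bilinear form, S a nondegenerate subspace whose orthogonal complement S^⊥ is a Lie subalgebra. For η ∈ S^⊥ define α : S → S by α(v) = ½ π_S([v, η]) (where π_S is orthogonal projection onto S). Then for every v ∈ S, ½[v,η] ∈ S (so α(v) = ½[v,η]), and the operator K : S → g, K(v) = ¼[η,[η,v]], satisfies K = α ∘ α; in particular K maps S into S and commutes with α. -/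
open LinearMap (BilinForm)

/-- In a Lie algebra with ad-invariant nondegenerate symmetric bilinear
form, let `S` be a nondegenerate subspace whose orthogonal complement `S^⊥` is a Lie
subalgebra, and let `η ∈ S^⊥`. Then for every `v ∈ S` the invariant shape operator
`α(v) = ½ π_S(⁅v,η⁆)` satisfies `α(v) = ½⁅v,η⁆ ∈ S`, and the normal Jacobi operator
`K(v) = ¼⁅η,⁅η,v⁆⁆` satisfies `K = α ∘ α`; in particular `K` maps `S` into `S` and
commutes with `α`. -/
theorem stmt10 (g : Type*) [LieRing g] [LieAlgebra ℝ g] [Module.Finite ℝ g]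
    (B : BilinForm ℝ g) (hBnd : B.Nondegenerate)
    (hBsymm : ∀ x y : g, B x y = B y x)
    (hBinv : ∀ x y z : g, B ⁅x, y⁆ z = B x ⁅y, z⁆)
    (S : Submodule ℝ g) (hSnd : (B.restrict S).Nondegenerate)
    (hclosed : ∀ x ∈ B.orthogonal S, ∀ y ∈ B.orthogonal S, ⁅x, y⁆ ∈ B.orthogonal S)
    (η : g) (hη : η ∈ B.orthogonal S) :
    ∀ v ∈ S,
      -- α(v) = ½⁅v,η⁆ lies in S (so the projection π_S is the identity on it)
      (1 / 2 : ℝ) • ⁅v, η⁆ ∈ S ∧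
      -- K = α ∘ α
      (1 / 4 : ℝ) • ⁅η, ⁅η, v⁆⁆ = (1 / 2 : ℝ) • ⁅(1 / 2 : ℝ) • ⁅v, η⁆, η⁆ ∧
      -- K maps S into S
      (1 / 4 : ℝ) • ⁅η, ⁅η, v⁆⁆ ∈ S ∧
      -- K commutes with α
      (1 / 2 : ℝ) • ⁅(1 / 4 : ℝ) • ⁅η, ⁅η, v⁆⁆, η⁆ =
        (1 / 4 : ℝ) • ⁅η, ⁅η, (1 / 2 : ℝ) • ⁅v, η⁆⁆⁆ := by
  have hrefl : B.IsRefl := fun x y h => by rw [hBsymm]; exact h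
  have hoo := LinearMap.BilinForm.orthogonal_orthogonal hBnd hrefl S
  have key : ∀ v ∈ S, ⁅v, η⁆ ∈ S := by
    intro v hv
    rw [← hoo, LinearMap.BilinForm.mem_orthogonal_iff]
    intro w hw
    have h0 : B ⁅v, η⁆ w = 0 := by
      rw [hBinv]
      exact hclosed η hη w hw v hv
    show B w ⁅v, η⁆ = 0
    rw [hBsymm]; exact h0
  have heq : ∀ w : g, ⁅η, ⁅η, w⁆⁆ = ⁅⁅w, η⁆, η⁆ := by
    intro w
    rw [← lie_skew ⁅w, η⁆ η, ← lie_neg, ← lie_skew w η, neg_neg]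
  intro v hv
  have h1 : ⁅v, η⁆ ∈ S := key v hv
  have h2 : ⁅⁅v, η⁆, η⁆ ∈ S := key _ h1
  refine ⟨Submodule.smul_mem _ _ h1, ?_, ?_, ?_⟩
  · rw [heq v, smul_lie, smul_smul]; congr 1; norm_num
  · rw [heq v]; exact Submodule.smul_mem _ _ h2
  · rw [heq v, smul_lie, lie_smul, lie_smul, smul_smul, smul_smul, heq ⁅v, η⁆]
    congr 1
    norm_num
end

section
/- Let g be a Lie algebra with ad-invariant nondegenerate symmetric bilinear form, S a 2-dimensional nondegenerate subspace with S^⊥ a Lie subalgebra, and η ∈ S^⊥. Then the operator K : S → S, K(v) = ¼[η,[η,v]], is a scalar multiple of the identity; in particular K commutes with every endomorphism of S. -/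
open LinearMap (BilinForm)

/-!
Invariance of `B` makes `ad η` skew-adjoint, and `ad η` preserves `S = (S^⊥)^⊥` because `S^⊥` is
a subalgebra containing `η`. A skew-adjoint endomorphism for a nondegenerate form is conjugate,
through the form, to minus its transpose, hence traceless; by Cayley–Hamilton a traceless
endomorphism `f` of a 2-dimensional space satisfies `f ^ 2 = -det f • 1`.
-/

namespace LinearMap

variable {R M : Type*} [CommRing R] [AddCommGroup M] [Module R M]

theorem sq_eq_trace_smul_sub_det_smul_one_of_finrank_eq_two [Nontrivial R] [Module.Free R M]
    [Module.Finite R M] (hM : Module.finrank R M = 2) (f : Module.End R M) :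
    f ^ 2 = trace R M f • f - LinearMap.det f • 1 := by
  let b := Module.finBasisOfFinrankEq R M hM
  have hCH := aeval_self_charpoly f
  rw [← charpoly_toMatrix f b, Matrix.charpoly_fin_two, ← trace_eq_matrix_trace,
    det_toMatrix] at hCH
  simp only [map_add, map_sub, map_mul, map_pow, Polynomial.aeval_X, Polynomial.aeval_C,
    Algebra.algebraMap_eq_smul_one, smul_mul_assoc, one_mul] at hCH
  rw [← sub_eq_zero, ← hCH]
  abel

end LinearMap

namespace LinearMap.BilinForm

variable {K V : Type*} [Field K] [AddCommGroup V] [Module K V]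

theorem trace_eq_zero_of_isSkewAdjoint [FiniteDimensional K V] [NeZero (2 : K)]
    {B : BilinForm K V} (hB : B.Nondegenerate) {f : Module.End K V} (hf : B.IsSkewAdjoint f) :
    trace K V f = 0 := by
  let e := B.toDual hB
  have hconj : f = -e.symm.conj (Module.Dual.transpose f) := by
    ext x
    rw [LinearMap.neg_apply, LinearEquiv.symm_conj_apply, eq_neg_iff_add_eq_zero]
    apply e.injective
    ext y
    have hxy : B (f x) y = B x ((-f) y) := hf x y
    simp [e, toDual_def, Module.Dual.transpose_apply, hxy]
  have htrace := congrArg (trace K V) hconj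
  rw [map_neg, trace_conj', trace_transpose'] at htrace
  rwa [eq_neg_iff_add_eq_zero, ← two_mul, mul_eq_zero, or_iff_right two_ne_zero] at htrace

theorem lieInvariant_of_apply_lie {L : Type*} [LieRing L] [Module K L] {B : BilinForm K L}
    (hB : ∀ x y z : L, B ⁅x, y⁆ z = B x ⁅y, z⁆) : B.lieInvariant L := by
  intro x y z
  rw [← lie_skew, map_neg, LinearMap.neg_apply, hB]

end LinearMap.BilinForm

theorem lie_mem_of_mem_orthogonal {K L : Type*} [Field K] [LieRing L] [LieAlgebra K L]
    [FiniteDimensional K L] {B : BilinForm K L} (hBnd : B.Nondegenerate) (hBrefl : B.IsRefl)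
    (hBinv : B.lieInvariant L) {S : Submodule K L}
    (hclosed : ∀ x ∈ B.orthogonal S, ∀ y ∈ B.orthogonal S, ⁅x, y⁆ ∈ B.orthogonal S)
    {η : L} (hη : η ∈ B.orthogonal S) {v : L} (hv : v ∈ S) : ⁅η, v⁆ ∈ S := by
  rw [← B.orthogonal_orthogonal hBnd hBrefl S, LinearMap.BilinForm.mem_orthogonal_iff]
  intro x hx
  have hηx : B ⁅η, x⁆ v = 0 := hBrefl _ _ (hclosed η hη x hx v hv)
  show B x ⁅η, v⁆ = 0
  rw [← neg_eq_zero, ← hBinv]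
  exact hηx

/-- In a Lie algebra with ad-invariant nondegenerate symmetric bilinear
form, if `S` is a 2-dimensional nondegenerate subspace with `S^⊥` a Lie subalgebra, and
`η ∈ S^⊥`, then the operator `K(v) = ¼⁅η,⁅η,v⁆⁆` on `S` is a scalar multiple of the
identity; in particular it commutes with every endomorphism of `S`. -/
theorem stmt13 (g : Type*) [LieRing g] [LieAlgebra ℝ g] [Module.Finite ℝ g]
    (B : BilinForm ℝ g) (hBnd : B.Nondegenerate)
    (hBsymm : ∀ x y : g, B x y = B y x)
    (hBinv : ∀ x y z : g, B ⁅x, y⁆ z = B x ⁅y, z⁆)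
    (S : Submodule ℝ g) (hSnd : (B.restrict S).Nondegenerate)
    (hSdim : Module.finrank ℝ S = 2)
    (hclosed : ∀ x ∈ B.orthogonal S, ∀ y ∈ B.orthogonal S, ⁅x, y⁆ ∈ B.orthogonal S)
    (η : g) (hη : η ∈ B.orthogonal S) :
    ∃ c : ℝ, (∀ v ∈ S, (1 / 4 : ℝ) • ⁅η, ⁅η, v⁆⁆ = c • v) ∧
      ∀ A : Module.End ℝ g, (∀ v ∈ S, A v ∈ S) →
        ∀ v ∈ S, A ((1 / 4 : ℝ) • ⁅η, ⁅η, v⁆⁆) = (1 / 4 : ℝ) • ⁅η, ⁅η, A v⁆⁆ := by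
  have hBlie := LinearMap.BilinForm.lieInvariant_of_apply_lie hBinv
  have hBrefl : B.IsRefl := fun x y h => hBsymm x y ▸ h
  let f : Module.End ℝ S := (LieAlgebra.ad ℝ g η).restrict
    fun v hv => lie_mem_of_mem_orthogonal hBnd hBrefl hBlie hclosed hη hv
  have hf : ∀ v : S, (f v : g) = ⁅η, (v : g)⁆ := fun v => rfl
  have hskew : (B.restrict S).IsSkewAdjoint f := fun v w => by
    simp only [LinearMap.BilinForm.restrict_apply, Pi.neg_apply, map_neg, hf]
    exact hBlie η v w
  have hsq := f.sq_eq_trace_smul_sub_det_smul_one_of_finrank_eq_two hSdim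
  rw [LinearMap.BilinForm.trace_eq_zero_of_isSkewAdjoint hSnd hskew, zero_smul, zero_sub] at hsq
  have hK : ∀ v ∈ S, (1 / 4 : ℝ) • ⁅η, ⁅η, v⁆⁆ = (1 / 4 * -LinearMap.det f) • v := by
    intro v hv
    have hsqv := congrArg (fun F : Module.End ℝ S => (F ⟨v, hv⟩ : g)) hsq
    simp only [pow_two, Module.End.mul_apply, hf, LinearMap.neg_apply, LinearMap.smul_apply,
      Module.End.one_apply, Submodule.coe_neg, Submodule.coe_smul] at hsqv
    rw [hsqv]
    module
  refine ⟨_, hK, fun A hA v hv => ?_⟩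
  rw [hK v hv, hK (A v) (hA v hv), map_smul]
end

section
/- Every 3-dimensional real Lie algebra that is nonabelian and admits an ad-invariant nondegenerate symmetric bilinear form is simple (isomorphic to sl(2,ℝ) or su(2)). -/
open LinearMap (BilinForm)
open Module Submodule

/-! For an invariant nondegenerate form, `I ↦ Iᗮ` maps ideals to ideals with
`dim I + dim Iᗮ = dim L`, and the centre is `[L, L]ᗮ`. A one-dimensional ideal `K ∙ z` is
central: writing `⁅x, z⁆ = λ x • z`, invariance gives `λ x * B z y + λ y * B z x = 0`, which
forces `λ = 0` since `B z ≠ 0`. In dimension three a nonabelian algebra has trivial centre: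
if `⁅x, y⁆ ≠ 0` and the centre `Z` is nonzero, then `L = span {x, y} ⊕ Z`, so
`[L, L] ⊆ K ∙ ⁅x, y⁆` and `dim Z = 3 - dim [L, L] ≥ 2`, leaving no room for `span {x, y}`.
So there is no ideal of dimension one, and by passing to `Iᗮ` none of dimension two. -/

theorem LieSubmodule.finrank_pos_iff_ne_bot {K L M : Type*} [Field K] [LieRing L] [AddCommGroup M]
    [Module K M] [LieRingModule L M] [Module.Finite K M] {N : LieSubmodule K L M} :
    0 < finrank K N ↔ N ≠ ⊥ := by
  rw [Module.finrank_pos_iff, LieSubmodule.nontrivial_iff_ne_bot]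

theorem LinearMap.BilinForm.lieInvariant_of_apply_lie_eq_apply_lie {K L : Type*} [CommRing K]
    [LieRing L] [LieAlgebra K L] {B : BilinForm K L} (h : ∀ x y z : L, B ⁅x, y⁆ z = B x ⁅y, z⁆) :
    B.lieInvariant L := fun x y z => by
  rw [← h, ← lie_skew, map_neg, LinearMap.neg_apply]

namespace LieAlgebra

section Bracket

variable {K L : Type*} [Field K] [LieRing L] [LieAlgebra K L] {x y : L}

theorem eq_zero_and_eq_zero_of_lie_smul_add_smul (h : ⁅x, y⁆ ≠ 0) {s t : K}
    (hx : ⁅x, s • x + t • y⁆ = 0) (hy : ⁅s • x + t • y, y⁆ = 0) : s = 0 ∧ t = 0 := by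
  simp only [lie_add, add_lie, lie_smul, smul_lie, lie_self, smul_zero, zero_add, add_zero] at hx hy
  exact ⟨(smul_eq_zero.1 hy).resolve_right h, (smul_eq_zero.1 hx).resolve_right h⟩

theorem linearIndependent_pair_of_lie_ne_zero (h : ⁅x, y⁆ ≠ 0) : LinearIndependent K ![x, y] :=
  LinearIndependent.pair_iff.2 fun _ _ hst =>
    eq_zero_and_eq_zero_of_lie_smul_add_smul h (by rw [hst, lie_zero]) (by rw [hst, zero_lie])

theorem span_pair_inf_center_eq_bot (h : ⁅x, y⁆ ≠ 0) :
    span K {x, y} ⊓ (center K L).toSubmodule = ⊥ := by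
  rw [eq_bot_iff]
  rintro _ ⟨hu, hcen⟩
  obtain ⟨s, t, rfl⟩ := mem_span_pair.1 hu
  have hcen : ∀ w : L, ⁅w, s • x + t • y⁆ = 0 := (LieModule.mem_maxTrivSubmodule K L L _).1 hcen
  obtain ⟨rfl, rfl⟩ := eq_zero_and_eq_zero_of_lie_smul_add_smul h (hcen x)
    (by rw [← lie_skew, hcen y, neg_zero])
  simp

theorem finrank_span_pair_sup_center [Module.Finite K L] (h : ⁅x, y⁆ ≠ 0) :
    finrank K ↥(span K {x, y} ⊔ (center K L).toSubmodule) = 2 + finrank K (center K L) := by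
  have := finrank_sup_add_finrank_inf_eq (span K {x, y}) (center K L).toSubmodule
  rw [span_pair_inf_center_eq_bot h, finrank_bot, add_zero] at this
  rw [this, ← Matrix.range_cons_cons_empty x y ![],
    finrank_span_eq_card (linearIndependent_pair_of_lie_ne_zero h), Fintype.card_fin]
  rfl

theorem lie_mem_span_lie_of_mem_span_pair {a b : L} (ha : a ∈ span K {x, y})
    (hb : b ∈ span K {x, y}) : ⁅a, b⁆ ∈ K ∙ ⁅x, y⁆ := by
  obtain ⟨s, t, rfl⟩ := mem_span_pair.1 ha
  obtain ⟨s', t', rfl⟩ := mem_span_pair.1 hb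
  refine mem_span_singleton.2 ⟨s * t' - t * s', ?_⟩
  simp only [lie_add, add_lie, lie_smul, smul_lie, lie_self, smul_zero, zero_add, add_zero,
    ← lie_skew y x]
  module

theorem lie_mem_span_lie_of_mem_sup_center {a b : L}
    (ha : a ∈ span K {x, y} ⊔ (center K L).toSubmodule)
    (hb : b ∈ span K {x, y} ⊔ (center K L).toSubmodule) : ⁅a, b⁆ ∈ K ∙ ⁅x, y⁆ := by
  obtain ⟨p, hp, z, hz, rfl⟩ := mem_sup.1 ha
  obtain ⟨q, hq, z', hz', rfl⟩ := mem_sup.1 hb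
  have hz : ∀ w : L, ⁅w, z⁆ = 0 := (LieModule.mem_maxTrivSubmodule K L L _).1 hz
  have hz' : ∀ w : L, ⁅w, z'⁆ = 0 := (LieModule.mem_maxTrivSubmodule K L L _).1 hz'
  have hzl : ∀ w : L, ⁅z, w⁆ = 0 := fun w => by rw [← lie_skew, hz, neg_zero]
  simp only [add_lie, lie_add, hz', hzl, add_zero]
  exact lie_mem_span_lie_of_mem_span_pair hp hq

theorem finrank_lie_top_top_le_one
    (h : span K {x, y} ⊔ (center K L).toSubmodule = ⊤) :
    finrank K ↥⁅(⊤ : LieIdeal K L), (⊤ : LieIdeal K L)⁆ ≤ 1 := by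
  have : ⁅(⊤ : LieIdeal K L), (⊤ : LieIdeal K L)⁆.toSubmodule ≤ K ∙ ⁅x, y⁆ := by
    rw [LieSubmodule.lieIdeal_oper_eq_linear_span', span_le]
    rintro _ ⟨a, -, b, -, rfl⟩
    exact lie_mem_span_lie_of_mem_sup_center (h ▸ mem_top) (h ▸ mem_top)
  exact (finrank_mono this).trans ((finrank_span_le_card _).trans (by simp))

end Bracket

section InvariantForm

open InvariantForm

variable {K L : Type*} [Field K] [LieRing L] [LieAlgebra K L] {B : BilinForm K L}

theorem lie_eq_zero_of_forall_lie_eq_smul (hB : B.Nondegenerate) (hinv : B.lieInvariant L)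
    {z : L} (hz : ∀ x : L, ∃ c : K, ⁅x, z⁆ = c • z) (x : L) : ⁅x, z⁆ = 0 := by
  by_contra hxz
  obtain ⟨c, hc⟩ := hz x
  have hc0 : c ≠ 0 := by rintro rfl; exact hxz (by rw [hc, zero_smul])
  have hzx : B z x = 0 := by
    have : B ⁅x, z⁆ x = 0 := by rw [hinv, lie_self, map_zero, neg_zero]
    simpa [hc, hc0] using this
  refine hxz ?_
  rw [hB.1 z fun y => ?_, lie_zero]
  obtain ⟨d, hd⟩ := hz y
  have : B ⁅x, z⁆ y + B ⁅y, z⁆ x = 0 := by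
    rw [hinv, hinv, ← lie_skew x y, map_neg, neg_neg, add_neg_cancel]
  simpa [hc, hd, hzx, hc0] using this

theorem le_center_of_finrank_eq_one (hB : B.Nondegenerate) (hinv : B.lieInvariant L)
    {I : LieIdeal K L} (hI : finrank K I = 1) : I ≤ center K L := by
  intro z hzI
  rw [LieModule.mem_maxTrivSubmodule]
  refine lie_eq_zero_of_forall_lie_eq_smul hB hinv fun x => ?_
  rcases eq_or_ne z 0 with rfl | hz
  · exact ⟨0, by rw [lie_zero, zero_smul]⟩
  obtain ⟨c, hc⟩ := exists_smul_eq_of_finrank_eq_one hI (x := ⟨z, hzI⟩) (by simpa using hz)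
    ⟨⁅x, z⁆, I.lie_mem hzI⟩
  exact ⟨c, congrArg Subtype.val hc.symm⟩

theorem center_eq_orthogonal_lie_top_top (hB : B.Nondegenerate) (hinv : B.lieInvariant L) :
    center K L = orthogonal B hinv ⁅(⊤ : LieIdeal K L), (⊤ : LieIdeal K L)⁆ := by
  ext z
  rw [LieModule.mem_maxTrivSubmodule, InvariantForm.mem_orthogonal]
  constructor
  · intro hz
    have : (⁅(⊤ : LieIdeal K L), (⊤ : LieIdeal K L)⁆).toSubmodule ≤ LinearMap.ker (B.flip z) := by
      rw [LieSubmodule.lieIdeal_oper_eq_linear_span', span_le]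
      rintro _ ⟨x, -, y, -, rfl⟩
      change B ⁅x, y⁆ z = 0
      rw [hinv, hz, map_zero, neg_zero]
    exact fun w hw => this hw
  · intro hz x
    refine hB.2 _ fun y => ?_
    rw [← neg_eq_zero, ← hinv]
    exact hz _ (LieSubmodule.lie_mem_lie (LieSubmodule.mem_top x) (LieSubmodule.mem_top y))

variable [Module.Finite K L]

theorem finrank_orthogonal_add_finrank (hB : B.Nondegenerate) (hinv : B.lieInvariant L)
    (I : LieIdeal K L) : finrank K (orthogonal B hinv I) + finrank K I = finrank K L := by
  have := LinearMap.BilinForm.finrank_orthogonal hB I.toSubmodule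
  have := Submodule.finrank_le I.toSubmodule
  change finrank K (B.orthogonal I.toSubmodule) + finrank K I.toSubmodule = _
  omega

theorem center_eq_bot_of_finrank_eq_three (hB : B.Nondegenerate) (hinv : B.lieInvariant L)
    (hL : finrank K L = 3) (hnab : ¬IsLieAbelian L) : center K L = ⊥ := by
  obtain ⟨x, y, hxy⟩ : ∃ x y : L, ⁅x, y⁆ ≠ 0 := by
    by_contra! h
    exact hnab ⟨h⟩
  by_contra hZ
  have hZpos : 0 < finrank K (center K L) := LieSubmodule.finrank_pos_iff_ne_bot.2 hZ
  have hsup := finrank_span_pair_sup_center (K := K) hxy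
  have hsup_le := Submodule.finrank_le (span K {x, y} ⊔ (center K L).toSubmodule)
  have htop : span K {x, y} ⊔ (center K L).toSubmodule = ⊤ :=
    Submodule.eq_top_of_finrank_eq (by omega)
  have hD := finrank_lie_top_top_le_one htop
  have hZD := finrank_orthogonal_add_finrank hB hinv ⁅(⊤ : LieIdeal K L), (⊤ : LieIdeal K L)⁆
  rw [← center_eq_orthogonal_lie_top_top hB hinv] at hZD
  omega

theorem isSimple_of_finrank_eq_three (hB : B.Nondegenerate) (hinv : B.lieInvariant L)
    (hL : finrank K L = 3) (hnab : ¬IsLieAbelian L) : IsSimple K L where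
  non_abelian := hnab
  eq_bot_or_eq_top I := by
    have hZ := center_eq_bot_of_finrank_eq_three hB hinv hL hnab
    have hne_one : ∀ J : LieIdeal K L, finrank K J ≠ 1 := fun J hJ =>
      LieSubmodule.finrank_pos_iff_ne_bot.1 (by omega)
        (eq_bot_iff.2 (hZ ▸ le_center_of_finrank_eq_one hB hinv hJ))
    refine or_iff_not_imp_left.2 fun hI => ?_
    rw [← LieSubmodule.toSubmodule_eq_top]
    refine Submodule.eq_top_of_finrank_eq ?_
    have hI_pos := LieSubmodule.finrank_pos_iff_ne_bot.2 hI
    have hsum := finrank_orthogonal_add_finrank hB hinv I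
    have hI_ne_one := hne_one I
    have hIperp_ne_one := hne_one (orthogonal B hinv I)
    change finrank K I = _
    omega

end InvariantForm

end LieAlgebra

theorem stmt17_general (g : Type*) [LieRing g] [LieAlgebra ℝ g] [Module.Finite ℝ g]
    (hdim : Module.finrank ℝ g = 3)
    (hnonabelian : ¬ ∀ x y : g, ⁅x, y⁆ = 0)
    (B : BilinForm ℝ g) (hBnd : B.Nondegenerate)
    (hBinv : ∀ x y z : g, B ⁅x, y⁆ z = B x ⁅y, z⁆) :
    LieAlgebra.IsSimple ℝ g :=
  LieAlgebra.isSimple_of_finrank_eq_three hBnd (B.lieInvariant_of_apply_lie_eq_apply_lie hBinv) hdim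
    fun h => hnonabelian h.trivial

/-- Every 3-dimensional nonabelian real Lie algebra admitting an
ad-invariant nondegenerate symmetric bilinear form is simple. -/
theorem stmt17 (g : Type*) [LieRing g] [LieAlgebra ℝ g] [Module.Finite ℝ g]
    (hdim : Module.finrank ℝ g = 3)
    (hnonabelian : ¬ ∀ x y : g, ⁅x, y⁆ = 0)
    (B : BilinForm ℝ g) (hBnd : B.Nondegenerate)
    (hBsymm : ∀ x y : g, B x y = B y x)
    (hBinv : ∀ x y z : g, B ⁅x, y⁆ z = B x ⁅y, z⁆) :
    LieAlgebra.IsSimple ℝ g :=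
  stmt17_general g hdim hnonabelian B hBnd hBinv
end
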